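/- arXiv:0911.0209 — 2 statements merged into one kernel-verified Lean document; each statement's English description precedes it below -/
import Mathlib

section
/- Let a group G act by isometries on a Λ-tree (Γ, d) and x ∈ Γ. If the based length function l_x(g) = d(x, g·x) is regular (for all g, h ∈ G there is f ∈ G with g = f·g₁, h = f·h₁, l_x(g) = l_x(f) + l_x(g₁), l_x(h) = l_x(f) + l_x(h₁), and l_x(f) = c(g,h)), then the action is regular with respect to x: for all g, h ∈ G there exists f ∈ G with [x, f·x] = [x, g·x] ∩ [x, h·x]. -/
/-- A segment in a Λ-metric space: the image of an isometry from a closed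
interval `[a,b]` of `Λ`, with endpoints `y` and `z`. -/
def IsSegment {Λ : Type*} [AddCommGroup Λ] [LinearOrder Λ] [IsOrderedAddMonoid Λ] {X : Type*}
    (d : X → X → Λ) (s : Set X) (y z : X) : Prop :=
  ∃ a b : Λ, a ≤ b ∧ ∃ f : Λ → X,
    (∀ c ∈ Set.Icc a b, ∀ c' ∈ Set.Icc a b, d (f c) (f c') = |c' - c|) ∧
    f a = y ∧ f b = z ∧ s = f '' Set.Icc a b

/-- `d` makes `X` a Λ-tree: a geodesic Λ-metric space in which the union of two
segments meeting in a single common endpoint is a segment (T2), and the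
intersection of two segments with a common endpoint is a segment (T3). -/
def IsLambdaTree {Λ : Type*} [AddCommGroup Λ] [LinearOrder Λ] [IsOrderedAddMonoid Λ] {X : Type*}
    (d : X → X → Λ) : Prop :=
  (∀ x y : X, 0 ≤ d x y) ∧ (∀ x y : X, d x y = 0 ↔ x = y) ∧
  (∀ x y : X, d x y = d y x) ∧ (∀ x y z : X, d x y ≤ d x z + d y z) ∧
  (∀ x y : X, ∃ s, IsSegment d s x y) ∧
  (∀ (s₁ s₂ : Set X) (x y z : X), IsSegment d s₁ x y → IsSegment d s₂ y z →
    s₁ ∩ s₂ = {y} → IsSegment d (s₁ ∪ s₂) x z) ∧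
  (∀ (s₁ s₂ : Set X) (x y z : X), IsSegment d s₁ x y → IsSegment d s₂ x z →
    ∃ w, IsSegment d (s₁ ∩ s₂) x w)

/-- The segment `[x,y]` in a Λ-tree, described as the set of points between
`x` and `y`. -/
def seg {Λ : Type*} [AddCommGroup Λ] [LinearOrder Λ] [IsOrderedAddMonoid Λ] {X : Type*}
    (d : X → X → Λ) (x y : X) : Set X :=
  {w : X | d x w + d w y = d x y}

section Aux

variable {Λ : Type*} [AddCommGroup Λ] [LinearOrder Λ] [IsOrderedAddMonoid Λ] {X : Type*} {d : X → X → Λ}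

private lemma half_eq_zero {a : Λ} (h0 : 0 ≤ a) (h : a + a ≤ 0) : a = 0 :=
  le_antisymm (le_trans (le_add_of_nonneg_left h0) h) h0

private lemma half_le {a b : Λ} (h : a + a ≤ b + b) : a ≤ b := by
  by_contra hc
  push_neg at hc
  exact absurd h (not_le.mpr (add_lt_add hc hc))

private lemma flip_mem {a b c : Λ} (hc : c ∈ Set.Icc a b) :
    a + b - c ∈ Set.Icc a b := by
  constructor
  · exact le_sub_iff_add_le.mpr (add_le_add_right hc.2 a)
  · refine sub_le_iff_le_add.mpr ?_
    rw [add_comm b c]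
    exact add_le_add_left hc.1 b

lemma isSegment_left_mem {s : Set X} {y z : X} (h : IsSegment d s y z) : y ∈ s := by
  obtain ⟨a, b, hab, f, hf, hfa, hfb, hs⟩ := h
  rw [hs]; exact ⟨a, ⟨le_refl a, hab⟩, hfa⟩

lemma isSegment_right_mem {s : Set X} {y z : X} (h : IsSegment d s y z) : z ∈ s := by
  obtain ⟨a, b, hab, f, hf, hfa, hfb, hs⟩ := h
  rw [hs]; exact ⟨b, ⟨hab, le_refl b⟩, hfb⟩

lemma isSegment_symm {s : Set X} {y z : X} (h : IsSegment d s y z) :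
    IsSegment d s z y := by
  obtain ⟨a, b, hab, f, hf, hfa, hfb, hs⟩ := h
  refine ⟨a, b, hab, fun c => f (a + b - c), ?_, ?_, ?_, ?_⟩
  · intro c hc c' hc'
    show d (f (a + b - c)) (f (a + b - c')) = |c' - c|
    rw [hf _ (flip_mem hc) _ (flip_mem hc'),
      show a + b - c' - (a + b - c) = c - c' from by abel, abs_sub_comm]
  · show f (a + b - a) = z
    rw [add_sub_cancel_left]; exact hfb
  · show f (a + b - b) = y
    rw [add_sub_cancel_right]; exact hfa
  · have himg : (fun c => f (a + b - c)) '' Set.Icc a b = f '' Set.Icc a b := by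
      rw [show (fun c => f (a + b - c)) = f ∘ (fun c => a + b - c) from rfl,
        Set.image_comp, Set.image_const_sub_Icc, add_sub_cancel_right,
        add_sub_cancel_left]
    rw [himg]; exact hs

lemma isSegment_between {s : Set X} {y z : X} (h : IsSegment d s y z)
    {w : X} (hw : w ∈ s) : d y w + d w z = d y z := by
  obtain ⟨a, b, hab, f, hf, hfa, hfb, hs⟩ := h
  rw [hs] at hw
  obtain ⟨c, hc, rfl⟩ := hw
  have ha : a ∈ Set.Icc a b := ⟨le_refl a, hab⟩
  have hb : b ∈ Set.Icc a b := ⟨hab, le_refl b⟩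
  have h1 : d y (f c) = c - a := by
    rw [← hfa, hf _ ha _ hc, abs_of_nonneg (sub_nonneg.mpr hc.1)]
  have h2 : d (f c) z = b - c := by
    rw [← hfb, hf _ hc _ hb, abs_of_nonneg (sub_nonneg.mpr hc.2)]
  have h3 : d y z = b - a := by
    rw [← hfa, ← hfb, hf _ ha _ hb, abs_of_nonneg (sub_nonneg.mpr hab)]
  rw [h1, h2, h3]; abel

lemma isSegment_inj {s : Set X} {y z : X} (h : IsSegment d s y z)
    {w w' : X} (hw : w ∈ s) (hw' : w' ∈ s) (hd : d y w = d y w') : w = w' := by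
  obtain ⟨a, b, hab, f, hf, hfa, hfb, hs⟩ := h
  rw [hs] at hw hw'
  obtain ⟨c, hc, rfl⟩ := hw
  obtain ⟨c', hc', rfl⟩ := hw'
  have ha : a ∈ Set.Icc a b := ⟨le_refl a, hab⟩
  have h1 : d y (f c) = c - a := by
    rw [← hfa, hf _ ha _ hc, abs_of_nonneg (sub_nonneg.mpr hc.1)]
  have h2 : d y (f c') = c' - a := by
    rw [← hfa, hf _ ha _ hc', abs_of_nonneg (sub_nonneg.mpr hc'.1)]
  rw [h1, h2] at hd
  rw [sub_left_inj.mp hd]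

lemma isSegment_subset_eq {s t : Set X} {y z : X}
    (hs : IsSegment d s y z) (ht : IsSegment d t y z) (hts : t ⊆ s) : s = t := by
  refine Set.Subset.antisymm ?_ hts
  intro u hu
  have hs' := hs
  obtain ⟨a, b, hab, f, hf, hfa, hfb, hsi⟩ := hs'
  obtain ⟨a', b', hab', f', hf', hfa', hfb', hti⟩ := ht
  have ha : a ∈ Set.Icc a b := ⟨le_refl a, hab⟩
  have hb : b ∈ Set.Icc a b := ⟨hab, le_refl b⟩
  have ha' : a' ∈ Set.Icc a' b' := ⟨le_refl a', hab'⟩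
  have hb' : b' ∈ Set.Icc a' b' := ⟨hab', le_refl b'⟩
  have hlen : b - a = b' - a' := by
    have h1 : d y z = b - a := by
      rw [← hfa, ← hfb, hf _ ha _ hb, abs_of_nonneg (sub_nonneg.mpr hab)]
    have h2 : d y z = b' - a' := by
      rw [← hfa', ← hfb', hf' _ ha' _ hb', abs_of_nonneg (sub_nonneg.mpr hab')]
    rw [← h1, h2]
  have hu' := hu
  rw [hsi] at hu'
  obtain ⟨c, hc, hcu⟩ := hu'
  have hmem : a' + (c - a) ∈ Set.Icc a' b' := by
    constructor
    · exact le_add_of_nonneg_right (sub_nonneg.mpr hc.1)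
    · have h5 : c - a ≤ b' - a' := hlen ▸ sub_le_sub_right hc.2 a
      calc a' + (c - a) ≤ a' + (b' - a') := add_le_add_right h5 a'
        _ = b' := by abel
  have hu'mem : f' (a' + (c - a)) ∈ t := by rw [hti]; exact ⟨a' + (c - a), hmem, rfl⟩
  have hdist : d y (f' (a' + (c - a))) = c - a := by
    rw [← hfa', hf' _ ha' _ hmem, show a' + (c - a) - a' = c - a from by abel,
      abs_of_nonneg (sub_nonneg.mpr hc.1)]
  have hdist2 : d y u = c - a := by
    rw [← hcu, ← hfa, hf _ ha _ hc, abs_of_nonneg (sub_nonneg.mpr hc.1)]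
  have heq := isSegment_inj hs hu (hts hu'mem) (by rw [hdist, hdist2])
  rw [heq]; exact hu'mem

lemma isSegment_single {t : Set X} {w : X}
    (hzero : ∀ x y : X, d x y = 0 ↔ x = y)
    (h : IsSegment d t w w) : t = {w} := by
  obtain ⟨a, b, hab, f, hf, hfa, hfb, hs⟩ := h
  have ha : a ∈ Set.Icc a b := ⟨le_refl a, hab⟩
  have hb : b ∈ Set.Icc a b := ⟨hab, le_refl b⟩
  have hd : d w w = b - a := by
    nth_rewrite 1 [← hfa]
    nth_rewrite 1 [← hfb]
    rw [hf _ ha _ hb, abs_of_nonneg (sub_nonneg.mpr hab)]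
  have h0 : d w w = 0 := (hzero w w).mpr rfl
  have hba : b = a := sub_eq_zero.mp (by rw [← hd, h0])
  ext u
  rw [hs, hba]
  simp only [Set.Icc_self, Set.image_singleton, Set.mem_singleton_iff, hfa]

lemma isSegment_unique (htree : IsLambdaTree d)
    {s s' : Set X} {y z : X} (hs : IsSegment d s y z) (hs' : IsSegment d s' y z) :
    s = s' := by
  obtain ⟨hpos, hzero, hsymm, htri, hgeo, hT2, hT3⟩ := htree
  obtain ⟨w, hw⟩ := hT3 s s' y z z hs hs'
  have hz : z ∈ s ∩ s' := ⟨isSegment_right_mem hs, isSegment_right_mem hs'⟩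
  have h1 : d y z + d z w = d y w := isSegment_between hw hz
  have hwmem : w ∈ s ∩ s' := isSegment_right_mem hw
  have h2 : d y w + d w z = d y z := isSegment_between hs hwmem.1
  have key : d y z + (d w z + d w z) = d y z + 0 := by
    rw [add_zero]
    calc d y z + (d w z + d w z) = (d y z + d z w) + d w z := by
          rw [hsymm z w]; abel
      _ = d y w + d w z := by rw [h1]
      _ = d y z := h2
  have h4 : d w z = 0 :=
    half_eq_zero (hpos w z) (le_of_eq (add_left_cancel key))
  have hwz : w = z := (hzero w z).mp h4
  rw [hwz] at hw
  have e1 : s = s ∩ s' := isSegment_subset_eq hs hw Set.inter_subset_left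
  have e2 : s' = s ∩ s' := isSegment_subset_eq hs' hw Set.inter_subset_right
  exact e1.trans e2.symm

lemma mem_isSegment_of_between (htree : IsLambdaTree d)
    {s : Set X} {y z : X} (hs : IsSegment d s y z) {w : X}
    (hw : d y w + d w z = d y z) : w ∈ s := by
  obtain ⟨hpos, hzero, hsymm, htri, hgeo, hT2, hT3⟩ := htree
  obtain ⟨s₁, hs₁⟩ := hgeo y w
  obtain ⟨s₂, hs₂⟩ := hgeo w z
  obtain ⟨v, hv⟩ := hT3 s₁ s₂ w y z (isSegment_symm hs₁) hs₂
  have hvmem : v ∈ s₁ ∩ s₂ := isSegment_right_mem hv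
  have h1 : d y v + d v w = d y w := isSegment_between hs₁ hvmem.1
  have h2 : d w v + d v z = d w z := isSegment_between hs₂ hvmem.2
  have h3 : d y z ≤ d y v + d v z := by
    have := htri y z v
    rwa [hsymm z v] at this
  have key : d y v + d v z + (d v w + d v w) = d y z := by
    rw [← hw, ← h1, ← h2, hsymm w v]; abel
  have hle : d v w + d v w ≤ 0 := by
    have hsub : d v w + d v w = d y z - (d y v + d v z) := by
      rw [← key]; abel
    rw [hsub]
    exact sub_nonpos.mpr h3
  have h6 : d v w = 0 := half_eq_zero (hpos v w) hle
  have hvw : v = w := (hzero v w).mp h6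
  rw [hvw] at hv
  have hsingle : s₁ ∩ s₂ = {w} := isSegment_single hzero hv
  have hseg : IsSegment d (s₁ ∪ s₂) y z := hT2 s₁ s₂ y w z hs₁ hs₂ hsingle
  have hse : s = s₁ ∪ s₂ :=
    isSegment_unique ⟨hpos, hzero, hsymm, htri, hgeo, hT2, hT3⟩ hs hseg
  rw [hse]
  exact Or.inl (isSegment_right_mem hs₁)

lemma seg_eq_isSegment (htree : IsLambdaTree d)
    {s : Set X} {y z : X} (hs : IsSegment d s y z) : seg d y z = s :=
  Set.ext fun w => ⟨fun hw => mem_isSegment_of_between htree hs hw,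
    fun hw => isSegment_between hs hw⟩

end Aux

/-- If the based length function `l_x` of an isometric action of `G` on a Λ-tree
is regular, then the action is regular with respect to `x`. (The condition
`l_x f = c(g,h)` is stated as `2 l_x f = l_x g + l_x h - l_x (g⁻¹ h)`.) -/
theorem regular_length_implies_regular_action {Λ : Type*}
    [AddCommGroup Λ] [LinearOrder Λ] [IsOrderedAddMonoid Λ] {X : Type*} {G : Type*} [Group G] [MulAction G X]
    (d : X → X → Λ) (htree : IsLambdaTree d)
    (hiso : ∀ (g : G) (y z : X), d (g • y) (g • z) = d y z) (x : X)
    (hlen : ∀ g h : G, ∃ f g₁ h₁ : G, g = f * g₁ ∧ h = f * h₁ ∧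
      d x (g • x) = d x (f • x) + d x (g₁ • x) ∧
      d x (h • x) = d x (f • x) + d x (h₁ • x) ∧
      d x (f • x) + d x (f • x) =
        d x (g • x) + d x (h • x) - d x ((g⁻¹ * h) • x)) :
    ∀ g h : G, ∃ f : G,
      seg d x (f • x) = seg d x (g • x) ∩ seg d x (h • x) := by
  intro g h
  obtain ⟨f, g₁, h₁, hg, hh, eg, eh, ec⟩ := hlen g h
  refine ⟨f, ?_⟩
  obtain ⟨hpos, hzero, hsymm, htri, hgeo, hT2, hT3⟩ := htree
  have htree' : IsLambdaTree d := ⟨hpos, hzero, hsymm, htri, hgeo, hT2, hT3⟩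
  set p := f • x with hp
  -- p is between x and g•x, and between x and h•x
  have hdpg : d p (g • x) = d x (g₁ • x) := by
    rw [hg, mul_smul, hp, hiso]
  have hdph : d p (h • x) = d x (h₁ • x) := by
    rw [hh, mul_smul, hp, hiso]
  have hbpg : d x p + d p (g • x) = d x (g • x) := by rw [hdpg]; exact eg.symm
  have hbph : d x p + d p (h • x) = d x (h • x) := by rw [hdph]; exact eh.symm
  -- d (g•x) (h•x) = d x ((g⁻¹h)•x)
  have hgh : d (g • x) (h • x) = d x ((g⁻¹ * h) • x) := by
    have := hiso g x ((g⁻¹ * h) • x)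
    rw [← mul_smul, mul_inv_cancel_left] at this
    exact this
  -- get the segments
  obtain ⟨Sg, hSg⟩ := hgeo x (g • x)
  obtain ⟨Sh, hSh⟩ := hgeo x (h • x)
  obtain ⟨m, hm⟩ := hT3 Sg Sh x (g • x) (h • x) hSg hSh
  have hmmem : m ∈ Sg ∩ Sh := isSegment_right_mem hm
  have hmg : d x m + d m (g • x) = d x (g • x) := isSegment_between hSg hmmem.1
  have hmh : d x m + d m (h • x) = d x (h • x) := isSegment_between hSh hmmem.2
  -- p ∈ Sg ∩ Sh
  have hpSg : p ∈ Sg := mem_isSegment_of_between htree' hSg hbpg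
  have hpSh : p ∈ Sh := mem_isSegment_of_between htree' hSh hbph
  -- d x m ≤ d x p
  have htri' : d x ((g⁻¹ * h) • x) ≤ d m (g • x) + d m (h • x) := by
    have := htri (g • x) (h • x) m
    rwa [hsymm (g • x) m, hsymm (h • x) m, hgh] at this
  have hkey : d x m + d x m ≤ d x p + d x p := by
    rw [ec]
    have h1 : d x m + d x m + d x ((g⁻¹ * h) • x) ≤
        d x m + d x m + (d m (g • x) + d m (h • x)) := add_le_add_right htri' _
    have h2 : d x m + d x m + (d m (g • x) + d m (h • x)) =
        d x (g • x) + d x (h • x) := by rw [← hmg, ← hmh]; abel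
    rw [h2] at h1
    exact le_sub_iff_add_le.mpr h1
  have hmp : d x m ≤ d x p := half_le hkey
  -- p ∈ segment [x,m], so d x p ≤ d x m, hence p = m
  have hpm : d x p + d p m = d x m := isSegment_between hm ⟨hpSg, hpSh⟩
  have hpm0 : d p m = 0 := by
    refine le_antisymm ?_ (hpos p m)
    have hle : d x p + d p m ≤ d x p + 0 := by
      rw [add_zero, hpm]; exact hmp
    exact le_of_add_le_add_left hle
  have hpeqm : p = m := (hzero p m).mp hpm0
  rw [← hpeqm] at hm
  rw [seg_eq_isSegment htree' hm, seg_eq_isSegment htree' hSg,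
    seg_eq_isSegment htree' hSh]
end

section
/- Let a group G act freely by isometries on a Λ-tree Γ such that all branch points of Γ lie in a single G-orbit. Then the action of G is regular with respect to any branch point x of Γ: for all g, h ∈ G there exists f ∈ G with [x, f·x] = [x, g·x] ∩ [x, h·x]. -/
/-- `y` is a branch point of the Λ-tree: the median of three points not lying
on a common segment. -/
def IsBranchPoint {Λ : Type*} [AddCommGroup Λ] [LinearOrder Λ] [IsOrderedAddMonoid Λ] {X : Type*}
    (d : X → X → Λ) (y : X) : Prop :=
  ∃ a b c : X, y ∈ seg d a b ∧ y ∈ seg d b c ∧ y ∈ seg d a c ∧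
    a ∉ seg d b c ∧ b ∉ seg d a c ∧ c ∉ seg d a b


section Aux

variable {Λ : Type*} [AddCommGroup Λ] [LinearOrder Λ] [IsOrderedAddMonoid Λ] {X : Type*} {d : X → X → Λ}

lemma half_eq {a b : Λ} (h : a + a = b + b) : a = b := by
  rcases lt_trichotomy a b with hl | he | hg
  · exact absurd h (ne_of_lt (add_lt_add hl hl))
  · exact he
  · exact absurd h (ne_of_gt (add_lt_add hg hg))

lemma between_of_mem' {s : Set X} {x y : X} (hs : IsSegment d s x y) {p : X} (hp : p ∈ s) :
    d x p + d p y = d x y := by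
  obtain ⟨a, b, hab, f, hf, hfa, hfb, hseq⟩ := hs
  rw [hseq] at hp
  obtain ⟨c, hc, rfl⟩ := hp
  have ha : a ∈ Set.Icc a b := ⟨le_refl a, hab⟩
  have hb : b ∈ Set.Icc a b := ⟨hab, le_refl b⟩
  have h1 : d x (f c) = c - a := by
    rw [← hfa, hf a ha c hc, abs_of_nonneg (sub_nonneg.mpr hc.1)]
  have h2 : d (f c) y = b - c := by
    rw [← hfb, hf c hc b hb, abs_of_nonneg (sub_nonneg.mpr hc.2)]
  have h3 : d x y = b - a := by
    rw [← hfa, ← hfb, hf a ha b hb, abs_of_nonneg (sub_nonneg.mpr hab)]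
  rw [h1, h2, h3]; abel

lemma IsSegment.right_mem' {s : Set X} {x y : X} (hs : IsSegment d s x y) : y ∈ s := by
  obtain ⟨a, b, hab, f, hf, hfa, hfb, hseq⟩ := hs
  rw [hseq]
  exact ⟨b, ⟨hab, le_refl b⟩, hfb⟩

lemma IsSegment.symm' {s : Set X} {x y : X} (hs : IsSegment d s x y) : IsSegment d s y x := by
  obtain ⟨a, b, hab, f, hf, hfa, hfb, hseq⟩ := hs
  refine ⟨a, b, hab, fun t => f (a + b - t), ?_, ?_, ?_, ?_⟩
  · intro c hc c' hc'
    have h1 : a + b - c ∈ Set.Icc a b :=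
      ⟨by simpa using sub_le_sub_left hc.2 (a + b),
       by simpa using sub_le_sub_left hc.1 (a + b)⟩
    have h1' : a + b - c' ∈ Set.Icc a b :=
      ⟨by simpa using sub_le_sub_left hc'.2 (a + b),
       by simpa using sub_le_sub_left hc'.1 (a + b)⟩
    rw [hf _ h1 _ h1', show a + b - c' - (a + b - c) = c - c' by abel, abs_sub_comm]
  · simpa [show a + b - a = b by abel] using hfb
  · simpa [show a + b - b = a by abel] using hfa
  · rw [hseq, show (fun t => f (a + b - t)) '' Set.Icc a b
        = f '' ((fun t => a + b - t) '' Set.Icc a b) from (Set.image_image f _ _).symm,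
      Set.image_const_sub_Icc]

    simp [add_sub_cancel_right, add_sub_cancel_left]

lemma median_lemma
    (hT2 : ∀ (s₁ s₂ : Set X) (x y z : X), IsSegment d s₁ x y → IsSegment d s₂ y z →
      s₁ ∩ s₂ = {y} → IsSegment d (s₁ ∪ s₂) x z)
    (hT3 : ∀ (s₁ s₂ : Set X) (x y z : X), IsSegment d s₁ x y → IsSegment d s₂ x z →
      ∃ w, IsSegment d (s₁ ∩ s₂) x w)
    {s₁ s₂ : Set X} {x u v : X} (h₁ : IsSegment d s₁ x u) (h₂ : IsSegment d s₂ x v) :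
    ∃ w, IsSegment d (s₁ ∩ s₂) x w ∧ w ∈ s₁ ∧ w ∈ s₂ ∧ d u w + d w v = d u v := by
  obtain ⟨w, hw⟩ := hT3 s₁ s₂ x u v h₁ h₂
  have hwmem : w ∈ s₁ ∩ s₂ := hw.right_mem'
  obtain ⟨a, b, hab, f, hf, hfa, hfb, hs₁⟩ := h₁
  obtain ⟨a', b', hab', f', hf', hfa', hfb', hs₂⟩ := h₂
  have hw1 : w ∈ s₁ := hwmem.1
  have hw2 : w ∈ s₂ := hwmem.2
  rw [hs₁] at hw1
  rw [hs₂] at hw2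
  obtain ⟨c, hc, hcw⟩ := hw1
  obtain ⟨c', hc', hc'w⟩ := hw2
  have ht₁ : IsSegment d (f '' Set.Icc c b) w u :=
    ⟨c, b, hc.2, f, fun e he e' he' =>
      hf e ⟨hc.1.trans he.1, he.2⟩ e' ⟨hc.1.trans he'.1, he'.2⟩, hcw, hfb, rfl⟩
  have ht₂ : IsSegment d (f' '' Set.Icc c' b') w v :=
    ⟨c', b', hc'.2, f', fun e he e' he' =>
      hf' e ⟨hc'.1.trans he.1, he.2⟩ e' ⟨hc'.1.trans he'.1, he'.2⟩, hc'w, hfb', rfl⟩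
  have hsub₁ : f '' Set.Icc c b ⊆ s₁ := by
    rw [hs₁]; exact Set.image_mono (Set.Icc_subset_Icc hc.1 le_rfl)
  have hsub₂ : f' '' Set.Icc c' b' ⊆ s₂ := by
    rw [hs₂]; exact Set.image_mono (Set.Icc_subset_Icc hc'.1 le_rfl)
  have hinter : (f '' Set.Icc c b) ∩ (f' '' Set.Icc c' b') = {w} := by
    apply Set.eq_singleton_iff_unique_mem.mpr
    constructor
    · exact ⟨⟨c, ⟨le_rfl, hc.2⟩, hcw⟩, ⟨c', ⟨le_rfl, hc'.2⟩, hc'w⟩⟩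
    · rintro p ⟨hp1, hp2⟩
      have hpmem : p ∈ s₁ ∩ s₂ := ⟨hsub₁ hp1, hsub₂ hp2⟩
      have hxp := between_of_mem' hw hpmem
      obtain ⟨e, he, rfl⟩ := hp1
      have hea : e ∈ Set.Icc a b := ⟨hc.1.trans he.1, he.2⟩
      have hd1 : d x (f e) = e - a := by
        rw [← hfa, hf a ⟨le_rfl, hab⟩ e hea, abs_of_nonneg (sub_nonneg.mpr hea.1)]
      have hd2 : d (f e) w = e - c := by
        rw [← hcw, hf e hea c hc, abs_of_nonpos (sub_nonpos.mpr he.1), neg_sub]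
      have hd3 : d x w = c - a := by
        rw [← hfa, ← hcw, hf a ⟨le_rfl, hab⟩ c hc, abs_of_nonneg (sub_nonneg.mpr hc.1)]
      rw [hd1, hd2, hd3] at hxp
      have hec : e = c := half_eq (by
        calc e + e = (e - a) + (e - c) + (a + c) := by abel
          _ = (c - a) + (a + c) := by rw [hxp]
          _ = c + c := by abel)
      rw [hec, hcw]
  have hunion := hT2 _ _ u w v ht₁.symm' ht₂ hinter
  have hwu : w ∈ (f '' Set.Icc c b) ∪ (f' '' Set.Icc c' b') :=
    Or.inl ⟨c, ⟨le_rfl, hc.2⟩, hcw⟩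
  exact ⟨w, hw, hwmem.1, hwmem.2, between_of_mem' hunion hwu⟩

lemma mem_of_between' (htree : IsLambdaTree d)
    {s : Set X} {x y : X} (hs : IsSegment d s x y) {p : X}
    (hp : d x p + d p y = d x y) : p ∈ s := by
  obtain ⟨hnn, hzero, hsym, htri, hgeo, hT2, hT3⟩ := htree
  obtain ⟨s₂, hs₂⟩ := hgeo x p
  obtain ⟨w, hw, hw1, hw2, huv⟩ := median_lemma hT2 hT3 hs hs₂
  have e1 := between_of_mem' hs hw1
  have e2 := between_of_mem' hs₂ hw2
  have h6 : d w p + d w p + (d x w + d w y) = 0 + (d x w + d w y) := by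
    calc d w p + d w p + (d x w + d w y)
        = (d x w + d w p) + (d w y + d w p) := by abel
      _ = d x p + (d y w + d w p) := by rw [e2, hsym w y]
      _ = d x p + d y p := by rw [huv]
      _ = d x p + d p y := by rw [hsym y p]
      _ = d x y := hp
      _ = d x w + d w y := e1.symm
      _ = 0 + (d x w + d w y) := (zero_add _).symm
  have h7 := add_right_cancel h6
  have h8 : d w p = 0 := half_eq (by rw [h7, zero_add])
  have : w = p := (hzero w p).mp h8
  rw [← this]; exact hw1

lemma seg_eq_of_isSegment (htree : IsLambdaTree d)
    {s : Set X} {x y : X} (hs : IsSegment d s x y) : seg d x y = s := by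
  ext p
  constructor
  · intro hp
    exact mem_of_between' htree hs hp
  · intro hp
    exact between_of_mem' hs hp

end Aux

/-- If `G` acts freely on a Λ-tree and all branch points lie in a single
`G`-orbit, then the action is regular with respect to any branch point. -/
theorem regular_action_of_free_branch_transitive {Λ : Type*}
    [AddCommGroup Λ] [LinearOrder Λ] [IsOrderedAddMonoid Λ] {X : Type*} {G : Type*} [Group G] [MulAction G X]
    (d : X → X → Λ) (htree : IsLambdaTree d)
    (hiso : ∀ (g : G) (y z : X), d (g • y) (g • z) = d y z)
    (hfree : ∀ (g : G) (y : X), (g • y = y ∨ (g * g) • y = y) → g = 1)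
    (hbranch : ∀ y z : X, IsBranchPoint d y → IsBranchPoint d z →
      ∃ g : G, z = g • y) :
    ∀ x : X, IsBranchPoint d x → ∀ g h : G, ∃ f : G,
      seg d x (f • x) = seg d x (g • x) ∩ seg d x (h • x) := by
  intro x hx g h
  have htree' := htree
  obtain ⟨hnn, hzero, hsym, htri, hgeo, hT2, hT3⟩ := htree'
  obtain ⟨s₁, h₁⟩ := hgeo x (g • x)
  obtain ⟨s₂, h₂⟩ := hgeo x (h • x)
  obtain ⟨w, hw, hw1, hw2, huv⟩ := median_lemma hT2 hT3 h₁ h₂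
  have e1 := between_of_mem' h₁ hw1
  have e2 := between_of_mem' h₂ hw2
  have hseg : seg d x (g • x) ∩ seg d x (h • x) = seg d x w := by
    rw [seg_eq_of_isSegment htree h₁, seg_eq_of_isSegment htree h₂,
      seg_eq_of_isSegment htree hw]
  rw [hseg]
  by_cases hwx : w = x
  · exact ⟨1, by rw [one_smul, hwx]⟩
  by_cases hwg : w = g • x
  · exact ⟨g, by rw [hwg]⟩
  by_cases hwh : w = h • x
  · exact ⟨h, by rw [hwh]⟩
  have hwb : IsBranchPoint d w := by
    refine ⟨x, g • x, h • x, e1, huv, e2, ?_, ?_, ?_⟩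
    · intro hmem
      simp only [seg, Set.mem_setOf_eq] at hmem
      apply hwx
      have h6 : d x w + d x w + d (g • x) (h • x) = 0 + d (g • x) (h • x) := by
        calc d x w + d x w + d (g • x) (h • x)
            = d x w + d x w + (d (g • x) w + d w (h • x)) := by rw [huv]
          _ = (d x w + d w (g • x)) + (d x w + d w (h • x)) := by
              rw [hsym (g • x) w]; abel
          _ = d x (g • x) + d x (h • x) := by rw [e1, e2]
          _ = d (g • x) x + d x (h • x) := by rw [hsym x (g • x)]
          _ = d (g • x) (h • x) := hmem
          _ = 0 + d (g • x) (h • x) := (zero_add _).symm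
      have h7 := add_right_cancel h6
      have hA : d x w = 0 := half_eq (by rw [h7, zero_add])
      exact ((hzero x w).mp hA).symm
    · intro hmem
      simp only [seg, Set.mem_setOf_eq] at hmem
      apply hwg
      have h6 : d w (g • x) + d w (g • x) + (d x w + d w (h • x))
          = 0 + (d x w + d w (h • x)) := by
        calc d w (g • x) + d w (g • x) + (d x w + d w (h • x))
            = (d x w + d w (g • x)) + (d (g • x) w + d w (h • x)) := by
              rw [hsym (g • x) w]; abel
          _ = d x (g • x) + d (g • x) (h • x) := by rw [e1, huv]
          _ = d x (h • x) := hmem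
          _ = d x w + d w (h • x) := e2.symm
          _ = 0 + (d x w + d w (h • x)) := (zero_add _).symm
      have h7 := add_right_cancel h6
      have hB : d w (g • x) = 0 := half_eq (by rw [h7, zero_add])
      exact (hzero w (g • x)).mp hB
    · intro hmem
      simp only [seg, Set.mem_setOf_eq] at hmem
      apply hwh
      have h6 : d w (h • x) + d w (h • x) + (d x w + d w (g • x))
          = 0 + (d x w + d w (g • x)) := by
        calc d w (h • x) + d w (h • x) + (d x w + d w (g • x))
            = (d x w + d w (h • x)) + (d (g • x) w + d w (h • x)) := by
              rw [hsym (g • x) w]; abel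
          _ = d x (h • x) + d (g • x) (h • x) := by rw [e2, huv]
          _ = d x (h • x) + d (h • x) (g • x) := by rw [hsym (g • x) (h • x)]
          _ = d x (g • x) := hmem
          _ = d x w + d w (g • x) := e1.symm
          _ = 0 + (d x w + d w (g • x)) := (zero_add _).symm
      have h7 := add_right_cancel h6
      have hC : d w (h • x) = 0 := half_eq (by rw [h7, zero_add])
      exact (hzero w (h • x)).mp hC
  obtain ⟨f, hf⟩ := hbranch x w hx hwb
  exact ⟨f, by rw [← hf]⟩
end
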